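/- arXiv:1803.06203 — 2 statements merged into one kernel-verified Lean document; each statement's English description precedes it below -/
import Mathlib

section
/- Let C be a t×q matrix over a field K and N a q×d matrix whose columns form a basis of the null space of C. Let C' be a t'×q' matrix and L a q'×q matrix such that C'·L·v = 0 for every v in the null space of C. Let Q₁ be a q'×r matrix whose columns form an orthonormal basis of the column space of L·N, let Q₂ be a q'×(q'−r) matrix whose columns complete Q₁ to an orthonormal basis of K^{q'}, and let V₂ be a matrix whose columns form a basis of the null space of C'·Q₂. Then the columns of the concatenated matrix [Q₁ | Q₂·V₂] form a basis of the null space of C'. -/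
open Matrix

/-- The columns of the matrix `M` form a basis of the submodule `S`. -/
def ColsBasis {a b : Type*} (M : Matrix a b ℂ) (S : Submodule ℂ (a → ℂ)) : Prop :=
  LinearIndependent ℂ (fun j : b => fun i : a => M i j) ∧
    Submodule.span ℂ (Set.range (fun j : b => fun i : a => M i j)) = S

/-!
Since `r ≤ q'`, the matrix `Q = [Q₁ | Q₂]` is square, so `Qᴴ Q = 1` forces `Q Qᴴ = 1` and every
vector splits as `x = Q₁ (Q₁ᴴ x) + Q₂ (Q₂ᴴ x)`. The columns of `Q₁` span `L (ker C) ⊆ ker C'`, so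
`C' Q₁ = 0`; for `x ∈ ker C'` this puts `Q₂ᴴ x` in `ker (C' Q₂) = range V₂`. Linear independence
holds because `[Q₁ | Q₂ V₂] = Q · diag(1, V₂)` is a product of injective maps.
-/

lemma colsBasis_iff {a b : Type*} [Fintype b] (M : Matrix a b ℂ) (S : Submodule ℂ (a → ℂ)) :
    ColsBasis M S ↔ Function.Injective M.mulVec ∧ LinearMap.range M.mulVecLin = S := by
  rw [Matrix.mulVec_injective_iff, Matrix.range_mulVecLin]
  rfl

namespace Matrix

variable {R : Type*} [CommRing R] {l m n n₁ n₂ o : Type*} [Fintype m]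

lemma mul_eq_zero_iff_range_mulVecLin_le_ker [Fintype n] (A : Matrix l m R) (B : Matrix m n R) :
    A * B = 0 ↔ LinearMap.range B.mulVecLin ≤ LinearMap.ker A.mulVecLin := by
  rw [LinearMap.range_le_ker_iff, ← Matrix.mulVecLin_mul, LinearMap.ext_iff, ext_iff_mulVec]
  simp

lemma mulVec_injective_fromBlocks_one_zero_zero [Fintype n₁] [DecidableEq n₁] [Fintype o]
    {V : Matrix n₂ o R} (hV : Function.Injective V.mulVec) :
    Function.Injective (fromBlocks (1 : Matrix n₁ n₁ R) 0 0 V).mulVec := by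
  intro x y hxy
  simp only [fromBlocks_mulVec, one_mulVec, zero_mulVec, add_zero, zero_add] at hxy
  obtain ⟨hl, hr⟩ := Sum.elim_eq_iff.mp hxy
  rw [← Sum.elim_comp_inl_inr x, ← Sum.elim_comp_inl_inr y, hl, hV hr]

variable [StarRing R] {Q₁ : Matrix m n₁ R} {Q₂ : Matrix m n₂ R}

lemma mul_conjTranspose_add_mul_conjTranspose_eq_one [Fintype n₁] [Fintype n₂] [DecidableEq m]
    [DecidableEq n₁] [DecidableEq n₂] (e : m ≃ n₁ ⊕ n₂)
    (hQ : (fromCols Q₁ Q₂)ᴴ * fromCols Q₁ Q₂ = 1) :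
    Q₁ * Q₁ᴴ + Q₂ * Q₂ᴴ = 1 := by
  rwa [← fromCols_mul_fromRows, ← conjTranspose_fromCols_eq_fromRows_conjTranspose,
    ← mul_eq_one_comm_of_equiv e.symm]

lemma mulVec_injective_of_conjTranspose_mul_self_eq_one [Fintype n] [DecidableEq n]
    {Q : Matrix m n R} (hQ : Qᴴ * Q = 1) : Function.Injective Q.mulVec :=
  Function.LeftInverse.injective (g := Qᴴ.mulVec) fun v => by rw [mulVec_mulVec, hQ, one_mulVec]

lemma mulVec_injective_fromCols_mul [Fintype n₁] [Fintype n₂] [Fintype o] [DecidableEq n₁]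
    [DecidableEq n₂] {V : Matrix n₂ o R} (hQ : (fromCols Q₁ Q₂)ᴴ * fromCols Q₁ Q₂ = 1)
    (hV : Function.Injective V.mulVec) : Function.Injective (fromCols Q₁ (Q₂ * V)).mulVec := by
  have hfactor : fromCols Q₁ (Q₂ * V) =
      fromCols Q₁ Q₂ * (fromBlocks 1 0 0 V : Matrix (n₁ ⊕ n₂) (n₁ ⊕ o) R) := by
    rw [fromCols_mul_fromBlocks, Matrix.mul_one, Matrix.mul_zero, Matrix.mul_zero, add_zero,
      zero_add]
  rw [hfactor]
  intro x y hxy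
  simp only [← mulVec_mulVec] at hxy
  exact mulVec_injective_fromBlocks_one_zero_zero hV
    (mulVec_injective_of_conjTranspose_mul_self_eq_one hQ hxy)

lemma range_mulVecLin_fromCols_mul [Fintype n₁] [Fintype n₂] [Fintype o] [DecidableEq m]
    [DecidableEq n₁] [DecidableEq n₂] (e : m ≃ n₁ ⊕ n₂)
    (hQ : (fromCols Q₁ Q₂)ᴴ * fromCols Q₁ Q₂ = 1)
    {C : Matrix l m R} (hCQ₁ : C * Q₁ = 0) {V : Matrix n₂ o R}
    (hV : LinearMap.range V.mulVecLin = LinearMap.ker (C * Q₂).mulVecLin) :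
    LinearMap.range (fromCols Q₁ (Q₂ * V)).mulVecLin = LinearMap.ker C.mulVecLin := by
  refine le_antisymm ?_ fun x hx => ?_
  · rw [← mul_eq_zero_iff_range_mulVecLin_le_ker, mul_fromCols, hCQ₁, ← Matrix.mul_assoc,
      (mul_eq_zero_iff_range_mulVecLin_le_ker _ _).mpr hV.le, fromCols_zero]
  have hx : C *ᵥ x = 0 := hx
  have hsplit : x = Q₁ *ᵥ (Q₁ᴴ *ᵥ x) + Q₂ *ᵥ (Q₂ᴴ *ᵥ x) := by
    rw [mulVec_mulVec, mulVec_mulVec, ← add_mulVec,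
      mul_conjTranspose_add_mul_conjTranspose_eq_one e hQ, one_mulVec]
  obtain ⟨c, hc : V *ᵥ c = Q₂ᴴ *ᵥ x⟩ : Q₂ᴴ *ᵥ x ∈ LinearMap.range V.mulVecLin := by
    rw [hV]
    calc (C * Q₂) *ᵥ (Q₂ᴴ *ᵥ x)
        = (C * Q₁) *ᵥ (Q₁ᴴ *ᵥ x) + (C * Q₂) *ᵥ (Q₂ᴴ *ᵥ x) := by
          rw [hCQ₁, zero_mulVec, zero_add]
      _ = C *ᵥ x := by rw [← mulVec_mulVec, ← mulVec_mulVec, ← mulVec_add, ← hsplit]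
      _ = 0 := hx
  refine ⟨Sum.elim (Q₁ᴴ *ᵥ x) c, ?_⟩
  change fromCols Q₁ (Q₂ * V) *ᵥ _ = x
  rw [fromCols_mulVec_sumElim, ← mulVec_mulVec, hc, ← hsplit]

end Matrix

theorem stmt_3 {t q t' q' d r e : ℕ} (hr : r ≤ q')
    (C : Matrix (Fin t) (Fin q) ℂ) (N : Matrix (Fin q) (Fin d) ℂ)
    (hN : ColsBasis N (LinearMap.ker C.mulVecLin))
    (C' : Matrix (Fin t') (Fin q') ℂ) (L : Matrix (Fin q') (Fin q) ℂ)
    (hL : ∀ v, C.mulVec v = 0 → C'.mulVec (L.mulVec v) = 0)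
    (Q₁ : Matrix (Fin q') (Fin r) ℂ) (Q₂ : Matrix (Fin q') (Fin (q' - r)) ℂ)
    (hQ : (Matrix.fromCols Q₁ Q₂)ᴴ * Matrix.fromCols Q₁ Q₂ = 1)
    (hQ1 : Submodule.span ℂ (Set.range (fun j : Fin r => fun i : Fin q' => Q₁ i j))
      = LinearMap.range (L * N).mulVecLin)
    (V₂ : Matrix (Fin (q' - r)) (Fin e) ℂ)
    (hV₂ : ColsBasis V₂ (LinearMap.ker (C' * Q₂).mulVecLin)) :
    ColsBasis (Matrix.fromCols Q₁ (Q₂ * V₂)) (LinearMap.ker C'.mulVecLin) := by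
  rw [colsBasis_iff] at hN hV₂ ⊢
  have hCQ₁ : C' * Q₁ = 0 := by
    rw [mul_eq_zero_iff_range_mulVecLin_le_ker, (range_mulVecLin Q₁).trans hQ1,
      ← mul_eq_zero_iff_range_mulVecLin_le_ker, ← Matrix.mul_assoc,
      mul_eq_zero_iff_range_mulVecLin_le_ker, hN.2]
    intro v hv
    simpa [← mulVec_mulVec] using hL v hv
  have hsquare : Fin q' ≃ Fin r ⊕ Fin (q' - r) :=
    (finCongr (Nat.add_sub_cancel' hr).symm).trans finSumFinEquiv.symm
  exact ⟨mulVec_injective_fromCols_mul hQ hV₂.1,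
    range_mulVecLin_fromCols_mul hsquare hQ hCQ₁ hV₂.2⟩
end

section
/- Given polynomials F = {f₁,…,f_s} and any polynomial p ∈ P over ℝ (or ℂ) with a fixed inner product on each P_k, there exist polynomials q_f, f ∈ F, and a remainder r such that p = Σ_{f∈F} q_f·f + r, deg(q_f·f) ≤ deg(p) for all f, and each homogeneous component r^k of r lies in W_k(F), the orthogonal complement of M_k(F) in P_k. -/
/-- The leading form of a polynomial: its homogeneous component of top degree. -/
noncomputable def lf {n : ℕ} (f : MvPolynomial (Fin n) ℝ) : MvPolynomial (Fin n) ℝ :=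
  MvPolynomial.homogeneousComponent f.totalDegree f

/-- The space `M_k(F)`, spanned by the monomial multiples of the leading forms
of elements of `F` that are homogeneous of degree `k`. -/
noncomputable def Mk {n s : ℕ} (f : Fin s → MvPolynomial (Fin n) ℝ) (k : ℕ) :
    Submodule ℝ (MvPolynomial (Fin n) ℝ) :=
  Submodule.span ℝ {g | ∃ (i : Fin s) (α : Fin n →₀ ℕ),
    (∑ j, α j) + (f i).totalDegree = k ∧
    g = MvPolynomial.monomial α (1 : ℝ) * lf (f i)}

/-- `W_k(F)`: the orthogonal complement of `M_k(F)` within `P_k`, with respect to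
the inner product `B`. -/
noncomputable def Wk {n s : ℕ} (f : Fin s → MvPolynomial (Fin n) ℝ)
    (B : MvPolynomial (Fin n) ℝ →ₗ[ℝ] MvPolynomial (Fin n) ℝ →ₗ[ℝ] ℝ) (k : ℕ) :
    Submodule ℝ (MvPolynomial (Fin n) ℝ) :=
  MvPolynomial.homogeneousSubmodule (Fin n) ℝ k ⊓
    ⨅ m : Mk f k, LinearMap.ker (B (m : MvPolynomial (Fin n) ℝ))

/-! Since `M_k(F)` is finite-dimensional and `B` is anisotropic on it, every `v ∈ P_k` splits as
`v = m + w` with `m ∈ M_k(F)` and `w ∈ W_k(F)`. An element `m = Σ hᵢ lf(fᵢ)` of `M_k(F)` is the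
degree-`k` component of `Σ hᵢ fᵢ`, a polynomial of total degree at most `k`. Subtracting
`Σ hᵢ fᵢ + w` from `p`, with `k = deg p`, kills the top component of `p`; `w` goes into the
remainder and one descends on the degree. -/

open MvPolynomial

theorem LinearMap.BilinForm.exists_sub_mem_orthogonal {K V : Type*} [Field K] [AddCommGroup V]
    [Module K V] {B : LinearMap.BilinForm K V} {M : Submodule K V} [FiniteDimensional K M]
    (hM : (B.restrict M).Nondegenerate) (v : V) : ∃ m ∈ M, v - m ∈ B.orthogonal M := by
  let φ : Module.Dual K M := (B.flip v).comp M.subtype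
  let m : M := ((B.restrict M).flip.toDual hM.flip).symm φ
  refine ⟨m, m.2, LinearMap.BilinForm.mem_orthogonal_iff.2 fun u hu => ?_⟩
  have hm : B u m = B u v := LinearMap.BilinForm.apply_toDual_symm_apply (hB := hM.flip) φ ⟨u, hu⟩
  rw [map_sub, hm, sub_self]

theorem LinearMap.BilinForm.nondegenerate_of_apply_self_eq_zero {R M : Type*} [CommSemiring R]
    [AddCommMonoid M] [Module R M] {B : LinearMap.BilinForm R M}
    (hB : ∀ x, B x x = 0 → x = 0) : B.Nondegenerate :=
  ⟨fun x hx => hB x (hx x), fun y hy => hB y (hy y)⟩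

namespace MvPolynomial

variable {σ R : Type*} [CommSemiring R]

theorem IsHomogeneous.homogeneousComponent_add_mul {φ : MvPolynomial σ R} {i : ℕ}
    (hφ : φ.IsHomogeneous i) (j : ℕ) (ψ : MvPolynomial σ R) :
    homogeneousComponent (i + j) (φ * ψ) = φ * homogeneousComponent j ψ := by
  classical
  let _ := MvPolynomial.gradedAlgebra (σ := σ) (R := R)
  simpa [← decomposition.decompose'_apply] using
    DirectSum.coe_decompose_mul_add_of_left_mem (homogeneousSubmodule σ R) (b := ψ) (j := j)
      ((mem_homogeneousSubmodule _ _).2 hφ)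

theorem homogeneousComponent_totalDegree_ne_zero {φ : MvPolynomial σ R} (hφ : φ ≠ 0) :
    homogeneousComponent φ.totalDegree φ ≠ 0 := by
  obtain ⟨s, hs, hdeg⟩ := Finset.exists_mem_eq_sup φ.support (support_nonempty.2 hφ)
    fun s => s.sum fun _ e => e
  intro h0
  have := coeff_homogeneousComponent (φ := φ) (n := φ.totalDegree) s
  rw [h0, coeff_zero, if_pos (show s.degree = φ.totalDegree from hdeg.symm)] at this
  exact mem_support_iff.1 hs this.symm

theorem totalDegree_le_of_homogeneousComponent_eq_zero {φ : MvPolynomial σ R} {d : ℕ}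
    (h : ∀ k, d < k → homogeneousComponent k φ = 0) : φ.totalDegree ≤ d := by
  by_contra! hd
  have hφ : φ ≠ 0 := by rintro rfl; simp at hd
  exact homogeneousComponent_totalDegree_ne_zero hφ (h _ hd)

end MvPolynomial

section Reduction

variable {n s : ℕ} (f : Fin s → MvPolynomial (Fin n) ℝ)

theorem Mk_le_homogeneousSubmodule (k : ℕ) : Mk f k ≤ homogeneousSubmodule (Fin n) ℝ k := by
  rw [Mk, Submodule.span_le]
  rintro _ ⟨i, α, rfl, rfl⟩
  exact (isHomogeneous_monomial 1 (Finsupp.degree_eq_sum α)).mul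
    (homogeneousComponent_isHomogeneous _ _)

instance (k : ℕ) : FiniteDimensional ℝ (Mk f k) :=
  Submodule.finiteDimensional_of_le <| (Mk_le_homogeneousSubmodule f k).trans fun _ hp =>
    (mem_restrictTotalDegree _ _ _).2 ((mem_homogeneousSubmodule _ _).1 hp).totalDegree_le

theorem exists_homogeneousComponent_sum_eq_of_mem_Mk {d : ℕ} {m : MvPolynomial (Fin n) ℝ}
    (hm : m ∈ Mk f d) : ∃ h : Fin s → MvPolynomial (Fin n) ℝ,
      (∀ i, (h i * f i).totalDegree ≤ d) ∧ homogeneousComponent d (∑ i, h i * f i) = m := by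
  induction hm using Submodule.span_induction with
  | mem g hg =>
    obtain ⟨i, α, rfl, rfl⟩ := hg
    have hα := isHomogeneous_monomial (1 : ℝ) (Finsupp.degree_eq_sum α)
    refine ⟨Pi.single i (monomial α 1), fun j => ?_, ?_⟩
    · rcases eq_or_ne j i with rfl | hj
      · rw [Pi.single_eq_same]
        exact (totalDegree_mul _ _).trans (Nat.add_le_add_right hα.totalDegree_le _)
      · rw [Pi.single_eq_of_ne hj, zero_mul, totalDegree_zero]
        exact Nat.zero_le _
    · rw [Finset.sum_eq_single_of_mem i (Finset.mem_univ i) fun j _ hj => by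
        rw [Pi.single_eq_of_ne hj, zero_mul], Pi.single_eq_same]
      exact hα.homogeneousComponent_add_mul _ _
  | zero => exact ⟨0, by simp, by simp⟩
  | add x y _ _ hx hy =>
    obtain ⟨h₁, hdeg₁, rfl⟩ := hx
    obtain ⟨h₂, hdeg₂, rfl⟩ := hy
    refine ⟨h₁ + h₂, fun i => ?_, by simp [add_mul, Finset.sum_add_distrib]⟩
    rw [Pi.add_apply, add_mul]
    exact (totalDegree_add _ _).trans (max_le (hdeg₁ i) (hdeg₂ i))
  | smul c x _ hx =>
    obtain ⟨h, hdeg, rfl⟩ := hx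
    refine ⟨c • h, fun i => ?_, by simp [Finset.smul_sum]⟩
    rw [Pi.smul_apply, smul_mul_assoc]
    exact (totalDegree_smul_le _ _).trans (hdeg i)

variable {B : MvPolynomial (Fin n) ℝ →ₗ[ℝ] MvPolynomial (Fin n) ℝ →ₗ[ℝ] ℝ}

theorem Wk_eq (k : ℕ) :
    Wk f B k = homogeneousSubmodule (Fin n) ℝ k ⊓ LinearMap.BilinForm.orthogonal B (Mk f k) := by
  ext w
  simp [Wk, Submodule.mem_iInf]

theorem exists_sub_mem_Wk (hpos : ∀ a, a ≠ 0 → 0 < B a a) {k : ℕ} {v : MvPolynomial (Fin n) ℝ}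
    (hv : v ∈ homogeneousSubmodule (Fin n) ℝ k) : ∃ m ∈ Mk f k, v - m ∈ Wk f B k := by
  have hM : (LinearMap.BilinForm.restrict B (Mk f k)).Nondegenerate :=
    LinearMap.BilinForm.nondegenerate_of_apply_self_eq_zero fun x hx => by
      by_contra hx0
      exact (hpos x (by simpa using hx0)).ne' hx
  obtain ⟨m, hm, hvm⟩ := LinearMap.BilinForm.exists_sub_mem_orthogonal hM v
  exact ⟨m, hm, (Wk_eq f k).ge ⟨sub_mem hv (Mk_le_homogeneousSubmodule f k hm), hvm⟩⟩

theorem homogeneousComponent_mem_Wk {d : ℕ} {w : MvPolynomial (Fin n) ℝ} (hw : w ∈ Wk f B d)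
    (k : ℕ) : homogeneousComponent k w ∈ Wk f B k := by
  rw [homogeneousComponent_of_mem (Submodule.mem_inf.1 hw).1]
  split_ifs with hk
  · exact hk ▸ hw
  · exact zero_mem _

theorem exists_reduction_of_homogeneousComponent_eq_zero
    (hpos : ∀ a, a ≠ 0 → 0 < B a a) (d : ℕ) (p : MvPolynomial (Fin n) ℝ)
    (hp : ∀ k, d ≤ k → homogeneousComponent k p = 0) :
    ∃ (q : Fin s → MvPolynomial (Fin n) ℝ) (r : MvPolynomial (Fin n) ℝ),
      p = ∑ i, q i * f i + r ∧
      (∀ i k, d ≤ k → homogeneousComponent k (q i * f i) = 0) ∧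
      ∀ k, homogeneousComponent k r ∈ Wk f B k := by
  induction d generalizing p with
  | zero =>
    have hp0 : p = 0 := by
      rw [← sum_homogeneousComponent p]
      exact Finset.sum_eq_zero fun k _ => hp k k.zero_le
    exact ⟨0, 0, by simp [hp0], by simp, by simp⟩
  | succ d ih =>
    have hpd : p.totalDegree ≤ d := totalDegree_le_of_homogeneousComponent_eq_zero hp
    obtain ⟨m, hm, hw⟩ := exists_sub_mem_Wk f hpos (homogeneousComponent_mem d p)
    obtain ⟨h, hdeg, hhm⟩ := exists_homogeneousComponent_sum_eq_of_mem_Mk f hm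
    set w := homogeneousComponent d p - m
    have hwd : w ∈ homogeneousSubmodule (Fin n) ℝ d := (Submodule.mem_inf.1 hw).1
    have hp' : ∀ k, d ≤ k → homogeneousComponent k (p - ∑ i, h i * f i - w) = 0 := by
      intro k hk
      have hsum : (∑ i, h i * f i).totalDegree ≤ d := totalDegree_finsetSum_le fun i _ => hdeg i
      rw [map_sub, map_sub, homogeneousComponent_of_mem hwd]
      rcases hk.eq_or_lt with rfl | hk
      · rw [hhm, if_pos rfl]
        exact sub_self w
      · rw [homogeneousComponent_eq_zero _ _ (hpd.trans_lt hk),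
          homogeneousComponent_eq_zero _ _ (hsum.trans_lt hk), if_neg hk.ne', sub_zero, sub_zero]
    obtain ⟨q, r, hpqr, hq, hr⟩ := ih _ hp'
    refine ⟨h + q, r + w, ?_, fun i k hk => ?_, fun k => ?_⟩
    · simp only [Pi.add_apply, add_mul, Finset.sum_add_distrib]
      linear_combination hpqr
    · rw [Pi.add_apply, add_mul, map_add, hq i k (by omega),
        homogeneousComponent_eq_zero _ _ ((hdeg i).trans_lt hk), add_zero]
    · rw [map_add]
      exact add_mem (hr k) (homogeneousComponent_mem_Wk f hw k)

end Reduction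

theorem stmt_15_general {n s : ℕ} (f : Fin s → MvPolynomial (Fin n) ℝ)
    (B : MvPolynomial (Fin n) ℝ →ₗ[ℝ] MvPolynomial (Fin n) ℝ →ₗ[ℝ] ℝ)
    (hpos : ∀ a, a ≠ 0 → 0 < B a a)
    (p : MvPolynomial (Fin n) ℝ) :
    ∃ (q : Fin s → MvPolynomial (Fin n) ℝ) (r : MvPolynomial (Fin n) ℝ),
      p = ∑ i, q i * f i + r ∧
      (∀ i, (q i * f i).totalDegree ≤ p.totalDegree) ∧
      ∀ k : ℕ, MvPolynomial.homogeneousComponent k r ∈ Wk f B k := by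
  obtain ⟨q, r, hpqr, hq, hr⟩ := exists_reduction_of_homogeneousComponent_eq_zero f hpos
    (p.totalDegree + 1) p fun k hk => homogeneousComponent_eq_zero _ _ hk
  exact ⟨q, r, hpqr, fun i => totalDegree_le_of_homogeneousComponent_eq_zero (hq i), hr⟩

theorem stmt_15 {n s : ℕ} (f : Fin s → MvPolynomial (Fin n) ℝ)
    (B : MvPolynomial (Fin n) ℝ →ₗ[ℝ] MvPolynomial (Fin n) ℝ →ₗ[ℝ] ℝ)
    (hsymm : ∀ a b, B a b = B b a) (hpos : ∀ a, a ≠ 0 → 0 < B a a)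
    (p : MvPolynomial (Fin n) ℝ) :
    ∃ (q : Fin s → MvPolynomial (Fin n) ℝ) (r : MvPolynomial (Fin n) ℝ),
      p = ∑ i, q i * f i + r ∧
      (∀ i, (q i * f i).totalDegree ≤ p.totalDegree) ∧
      ∀ k : ℕ, MvPolynomial.homogeneousComponent k r ∈ Wk f B k :=
  stmt_15_general f B hpos p
end
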